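/- arXiv:2110.07290 — 2 statements merged into one kernel-verified Lean document; each statement's English description precedes it below -/
import Mathlib

section
/- Let B ⊆ ℝ^(n+1) be compact, strictly convex, with non-empty interior, and let v be a unit vector. Then the orthogonal projection p_v(B) of B onto the hyperplane v^⊥ is a compact strictly convex subset of that hyperplane (≅ ℝ^n) with non-empty interior. -/
open Metric Set
open scoped RealInnerProductSpace

/-- Orthogonal projection of `ℝ^{n+1}` onto the hyperplane orthogonal to `v`. -/
noncomputable def pv {n : ℕ} (v : EuclideanSpace ℝ (Fin (n + 1))) :
    EuclideanSpace ℝ (Fin (n + 1)) →L[ℝ] ↥((ℝ ∙ v)ᗮ) :=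
  Submodule.orthogonalProjection (ℝ ∙ v)ᗮ

/-- `B` is strictly convex: every open segment between two distinct points of `B`
lies in the interior of `B`. -/
def StrictlyConvexSet {V : Type*} [AddCommGroup V] [Module ℝ V] [TopologicalSpace V]
    (B : Set V) : Prop :=
  ∀ x ∈ B, ∀ y ∈ B, x ≠ y → openSegment ℝ x y ⊆ interior B

/-- Points of `B` projecting to the boundary of `p_v(B)`. -/
def D0 {n : ℕ} (B : Set (EuclideanSpace ℝ (Fin (n + 1)))) (v : EuclideanSpace ℝ (Fin (n + 1))) :
    Set (EuclideanSpace ℝ (Fin (n + 1))) :=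
  {x ∈ B | pv v x ∈ frontier (pv v '' B)}

/-- Upper region of `S = ∂B`: points over the interior of `p_v(B)` maximizing `x·v` on the fiber. -/
def Uplus {n : ℕ} (B : Set (EuclideanSpace ℝ (Fin (n + 1)))) (v : EuclideanSpace ℝ (Fin (n + 1))) :
    Set (EuclideanSpace ℝ (Fin (n + 1))) :=
  {x | x ∈ frontier B ∧ pv v x ∈ interior (pv v '' B) ∧
    ∀ y ∈ B, pv v y = pv v x → ⟪y, v⟫ ≤ ⟪x, v⟫}

/-- Lower region of `S = ∂B`: points over the interior of `p_v(B)` minimizing `x·v` on the fiber. -/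
def Uminus {n : ℕ} (B : Set (EuclideanSpace ℝ (Fin (n + 1)))) (v : EuclideanSpace ℝ (Fin (n + 1))) :
    Set (EuclideanSpace ℝ (Fin (n + 1))) :=
  {x | x ∈ frontier B ∧ pv v x ∈ interior (pv v '' B) ∧
    ∀ y ∈ B, pv v y = pv v x → ⟪x, v⟫ ≤ ⟪y, v⟫}

def Dplus {n : ℕ} (B : Set (EuclideanSpace ℝ (Fin (n + 1)))) (v : EuclideanSpace ℝ (Fin (n + 1))) :
    Set (EuclideanSpace ℝ (Fin (n + 1))) := D0 B v ∪ Uplus B v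

def Dminus {n : ℕ} (B : Set (EuclideanSpace ℝ (Fin (n + 1)))) (v : EuclideanSpace ℝ (Fin (n + 1))) :
    Set (EuclideanSpace ℝ (Fin (n + 1))) := D0 B v ∪ Uminus B v

/-- The median of `S` in direction `v`: midpoints of fiber pairs. -/
def median {n : ℕ} (B : Set (EuclideanSpace ℝ (Fin (n + 1)))) (v : EuclideanSpace ℝ (Fin (n + 1))) :
    Set (EuclideanSpace ℝ (Fin (n + 1))) :=
  {z | ∃ xp ∈ Dplus B v, ∃ xm ∈ Dminus B v, pv v xp = pv v xm ∧ z = midpoint ℝ xp xm}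

/-!
Being a surjective linear map between finite-dimensional spaces, `p_v` is open, so it maps
`interior B`, which contains the open segments of `B`, into the interior of `p_v(B)`.
-/

theorem StrictlyConvexSet.image_of_isOpenMap {E F : Type*} [AddCommGroup E] [Module ℝ E]
    [TopologicalSpace E] [AddCommGroup F] [Module ℝ F] [TopologicalSpace F]
    {𝓕 : Type*} [FunLike 𝓕 E F] [LinearMapClass 𝓕 ℝ E F]
    {B : Set E} (hB : StrictlyConvexSet B) (f : 𝓕) (hf : IsOpenMap f) :
    StrictlyConvexSet (f '' B) := by
  rintro _ ⟨x, hx, rfl⟩ _ ⟨y, hy, rfl⟩ hne _ ⟨a, b, ha, hb, hab, rfl⟩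
  have hxy : x ≠ y := fun h => hne (congrArg f h)
  have hmem : a • x + b • y ∈ interior B := hB x hx y hy hxy ⟨a, b, ha, hb, hab, rfl⟩
  simpa only [map_add, map_smul] using hf.image_interior_subset B ⟨_, hmem, rfl⟩

theorem pv_surjective {n : ℕ} (v : EuclideanSpace ℝ (Fin (n + 1))) :
    Function.Surjective (pv v) := fun z =>
  ⟨z, Submodule.orthogonalProjectionOnto_mem_subspace_eq_self z⟩

theorem pv_isOpenMap {n : ℕ} (v : EuclideanSpace ℝ (Fin (n + 1))) : IsOpenMap (pv v) :=
  (pv v).isOpenMap (pv_surjective v)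

theorem stmt1_general (n : ℕ) (B : Set (EuclideanSpace ℝ (Fin (n + 1))))
    (hBc : IsCompact B) (hBsc : StrictlyConvexSet B) (hBint : (interior B).Nonempty)
    (v : EuclideanSpace ℝ (Fin (n + 1))) :
    IsCompact (pv v '' B) ∧ StrictlyConvexSet (pv v '' B) ∧
      (interior (pv v '' B)).Nonempty :=
  ⟨hBc.image (pv v).continuous,
    hBsc.image_of_isOpenMap (pv v) (pv_isOpenMap v),
    (hBint.image (pv v)).mono ((pv_isOpenMap v).image_interior_subset B)⟩

theorem stmt1 (n : ℕ) (B : Set (EuclideanSpace ℝ (Fin (n + 1))))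
    (hBc : IsCompact B) (hBsc : StrictlyConvexSet B) (hBint : (interior B).Nonempty)
    (v : EuclideanSpace ℝ (Fin (n + 1))) (hv : ‖v‖ = 1) :
    IsCompact (pv v '' B) ∧ StrictlyConvexSet (pv v '' B) ∧
      (interior (pv v '' B)).Nonempty :=
  stmt1_general n B hBc hBsc hBint v
end

section
/- (Poincaré–Miranda) Let P = [-R₁,R₁] × ⋯ × [-R_n,R_n] and let g : P → ℝ^n be continuous with g_i(x) ≤ 0 whenever x_i = -R_i and g_i(x) ≥ 0 whenever x_i = R_i, for each i. Then g has at least one zero in P. -/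
/-!
Clamping `g` coordinatewise to the box, a fixed point of `x ↦ π (x - g (π x))`, with `π` the clamp,
is a zero of `g`: the sign conditions forbid the clamp from being active there. Such a fixed point
exists by Brouwer's theorem. By smooth approximation it suffices to treat a `C¹` self-map `q` of the
unit ball; if `q` had no fixed point, sending `x` to the point where the ray from `q x` through `x`
meets the sphere would be a `C¹` retraction `r` of the ball onto the sphere. For small `t` the map
`x ↦ x + t • (r x - x)` is injective and maps the open ball onto a set of the same volume, so
`∫ det (1 + t • (Dr - 1))` over the ball equals that volume. This integral is a polynomial in `t`,
hence equals the volume at `t = 1` as well, whereas `det Dr = 0` because `r` is sphere-valued.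
-/

open Metric Set MeasureTheory Filter Topology Polynomial

theorem ContinuousLinearMap.det_one_add_pos_of_norm_lt_one {E : Type*} [NormedAddCommGroup E]
    [NormedSpace ℝ E] [FiniteDimensional ℝ E] {A : E →L[ℝ] E} (hA : ‖A‖ < 1) :
    0 < (1 + A).det := by
  have hne : ∀ t ∈ Icc (0 : ℝ) 1, (1 + t • A).det ≠ 0 := by
    intro t ht
    have hsmall : ‖-(t • A)‖ < 1 := by
      rw [norm_neg, norm_smul, Real.norm_of_nonneg ht.1]
      nlinarith [norm_nonneg A, ht.2]
    have hunit : IsUnit (1 + t • A) := by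
      simpa using (Units.oneSub (-(t • A)) hsmall).isUnit
    exact ((hunit.map ContinuousLinearMap.toLinearMapRingHom).map LinearMap.det).ne_zero
  by_contra! hle
  obtain ⟨t, ht, h0⟩ : (0 : ℝ) ∈ (fun t : ℝ => (1 + t • A).det) '' Icc 0 1 :=
    intermediate_value_Icc' zero_le_one
      (ContinuousLinearMap.continuous_det.comp (by fun_prop)).continuousOn
      ⟨by simpa using hle, by simp [ContinuousLinearMap.det]⟩
  exact hne t ht h0

theorem LinearMap.exists_eval_eq_det_one_add_smul {K M : Type*} [Field K] [AddCommGroup M]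
    [Module K M] [FiniteDimensional K M] (A : M →ₗ[K] M) :
    ∃ p : K[X], p.natDegree ≤ Module.finrank K M ∧ ∀ t, p.eval t = (1 + t • A).det := by
  classical
  let b := Module.finBasis K M
  refine ⟨((X : K[X]) • (toMatrix b b A).map C + (1 : Matrix _ _ K).map C).det, ?_, fun t => ?_⟩
  · simpa using natDegree_det_X_add_C_le (toMatrix b b A) 1
  · rw [← det_toMatrix b, ← coe_evalRingHom, RingHom.map_det]
    congr 1
    ext i j
    simp only [RingHom.mapMatrix_apply, Matrix.map_apply, Matrix.add_apply, Matrix.smul_apply,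
      Matrix.one_apply, map_add, LinearMap.toMatrix_one, map_smul, smul_eq_mul, X_mul_C,
      coe_evalRingHom, eval_mul, eval_C, eval_X]
    ring

theorem exists_eval_eq_integral_of_natDegree_le {α : Type*} [MeasurableSpace α] {μ : Measure α}
    {f : ℝ → α → ℝ} {d : ℕ} (hf : ∀ t, Integrable (f t) μ)
    (hdeg : ∀ x, ∃ p : ℝ[X], p.natDegree ≤ d ∧ ∀ t, p.eval t = f t x) :
    ∃ P : ℝ[X], ∀ t, P.eval t = ∫ x, f t x ∂μ := by
  classical
  let s := Finset.range (d + 1)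
  let v : ℕ → ℝ := Nat.cast
  -- Lagrange interpolation at the nodes `0, …, d`
  have hinterp : ∀ t x, f t x = ∑ i ∈ s, f i x * (Lagrange.basis s v i).eval t := by
    intro t x
    obtain ⟨p, hpd, hp⟩ := hdeg x
    have hlt : p.degree < s.card := by
      rw [Finset.card_range]
      exact (degree_le_of_natDegree_le hpd).trans_lt (WithBot.coe_lt_coe.2 d.lt_succ_self)
    rw [← hp, Lagrange.eq_interpolate (Nat.cast_injective.injOn) hlt, Lagrange.interpolate_apply]
    simp [eval_finsetSum, hp, v]
  refine ⟨∑ i ∈ s, C (∫ x, f i x ∂μ) * Lagrange.basis s v i, fun t => ?_⟩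
  simp_rw [hinterp t]
  rw [integral_finsetSum _ fun (i : ℕ) _ => (hf i).mul_const _]
  simp [eval_finsetSum, integral_mul_const, v]

theorem HasFDerivAt.det_eq_zero_of_eventually_norm_eq_one {E : Type*} [NormedAddCommGroup E]
    [InnerProductSpace ℝ E] [FiniteDimensional ℝ E] {r : E → E} {A : E →L[ℝ] E} {x : E}
    (hr : HasFDerivAt r A x) (h : ∀ᶠ y in 𝓝 x, ‖r y‖ = 1) : A.det = 0 := by
  by_contra hdet
  have hA : IsUnit (A : E →ₗ[ℝ] E) := (LinearMap.isUnit_iff_isUnit_det _).2 (Ne.isUnit hdet)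
  obtain ⟨w, hw⟩ := LinearMap.range_eq_top.1 ((LinearMap.isUnit_iff_range_eq_top _).1 hA) (r x)
  have hconst : HasFDerivAt (fun y => ‖r y‖ ^ 2) (0 : E →L[ℝ] ℝ) x :=
    (hasFDerivAt_const 1 x).congr_of_eventuallyEq (h.mono fun y hy => by simp [hy])
  have := congrArg (fun L : E →L[ℝ] ℝ => L w) (hconst.unique hr.norm_sq)
  simp only [zero_apply, smul_apply, ContinuousLinearMap.comp_apply, innerSL_apply_apply] at this
  rw [show A w = r x from hw, real_inner_self_eq_norm_sq, h.self_of_nhds] at this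
  norm_num at this

theorem exists_eval_eq_setIntegral_det_one_add_smul {α E : Type*} [TopologicalSpace α]
    [T2Space α] [MeasurableSpace α] [OpensMeasurableSpace α] {μ : Measure α}
    [IsFiniteMeasureOnCompacts μ] [NormedAddCommGroup E] [NormedSpace ℝ E] [FiniteDimensional ℝ E]
    {A : α → E →L[ℝ] E} {K s : Set α} (hK : IsCompact K) (hA : ContinuousOn A K) (hsK : s ⊆ K) :
    ∃ P : ℝ[X], ∀ t, P.eval t = ∫ x in s, (1 + t • A x).det ∂μ := by
  refine exists_eval_eq_integral_of_natDegree_le (d := Module.finrank ℝ E) (fun t => ?_)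
    fun x => LinearMap.exists_eval_eq_det_one_add_smul (A x : E →ₗ[ℝ] E)
  have hcont : ContinuousOn (fun x => (1 + t • A x).det) K :=
    ContinuousLinearMap.continuous_det.comp_continuousOn
      (continuousOn_const.add (hA.const_smul t))
  exact (hcont.integrableOn_compact hK).mono_set hsK

theorem IsPreconnected.subset_image_of_isOpen_image {X : Type*} [TopologicalSpace X] {f : X → X}
    {U K : Set X} (hU : IsPreconnected U) (hUK : U ⊆ K) (hopen : IsOpen (f '' U))
    (hclosed : IsClosed (f '' K)) (hfrontier : ∀ x ∈ K \ U, f x ∉ U)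
    (hne : ∃ x ∈ U, f x ∈ U) : U ⊆ f '' U := by
  refine hU.subset_left_of_subset_union hopen hclosed.isOpen_compl
    (disjoint_compl_right.mono_left (image_mono hUK)) (fun y hy => ?_) ?_
  · by_cases hyK : y ∈ f '' K
    · obtain ⟨x, hxK, rfl⟩ := hyK
      by_cases hxU : x ∈ U
      · exact Or.inl (mem_image_of_mem f hxU)
      · exact absurd hy (hfrontier x ⟨hxK, hxU⟩)
    · exact Or.inr hyK
  · obtain ⟨x, hxU, hfx⟩ := hne
    exact ⟨f x, hfx, mem_image_of_mem f hxU⟩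

section Perturbation

variable {E : Type*} [NormedAddCommGroup E] [NormedSpace ℝ E] {v : E → E} {c : ℝ}

theorem injOn_add_of_norm_fderiv_le (hc : c < 1)
    (hv : ∀ x ∈ closedBall (0 : E) 1, DifferentiableAt ℝ v x)
    (hv' : ∀ x ∈ closedBall (0 : E) 1, ‖fderiv ℝ v x‖ ≤ c) :
    InjOn (fun x => x + v x) (closedBall (0 : E) 1) := by
  intro x hx y hy hxy
  have hlip : ‖v y - v x‖ ≤ c * ‖y - x‖ :=
    (convex_closedBall 0 1).norm_image_sub_le_of_norm_hasFDerivWithin_le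
      (fun z hz => (hv z hz).hasFDerivAt.hasFDerivWithinAt) hv' hx hy
  have hyx : y - x = -(v y - v x) := by
    rw [neg_sub]
    exact sub_eq_sub_iff_add_eq_add.2 (hxy.symm.trans (add_comm _ _))
  rw [hyx, norm_neg] at hlip
  have hzero : ‖v y - v x‖ = 0 := by nlinarith [norm_nonneg (v y - v x)]
  rw [norm_eq_zero, ← neg_eq_zero, ← hyx, sub_eq_zero] at hzero
  exact hzero.symm

theorem ball_subset_image_add_ball [FiniteDimensional ℝ E] (hc : c < 1)
    (hv : ∀ x ∈ closedBall (0 : E) 1, ContDiffAt ℝ 1 v x)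
    (hv' : ∀ x ∈ closedBall (0 : E) 1, ‖fderiv ℝ v x‖ ≤ c)
    (hsphere : ∀ x ∈ sphere (0 : E) 1, v x = 0) (h0 : ‖v 0‖ < 1) :
    ball (0 : E) 1 ⊆ (fun x => x + v x) '' ball 0 1 := by
  have hopen : IsOpen ((fun x => x + v x) '' ball (0 : E) 1) := by
    rw [isOpen_iff_mem_nhds]
    rintro _ ⟨x, hx, rfl⟩
    have hxK := ball_subset_closedBall hx
    have hF : HasStrictFDerivAt (fun x => x + v x) (1 + fderiv ℝ v x) x :=
      (hasStrictFDerivAt_id x).add ((hv x hxK).hasStrictFDerivAt one_ne_zero)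
    have hdet := ContinuousLinearMap.det_one_add_pos_of_norm_lt_one ((hv' x hxK).trans_lt hc)
    have hunit := (LinearMap.isUnit_iff_isUnit_det _).2 (Ne.isUnit hdet.ne')
    rw [← hF.map_nhds_eq_of_surj ((LinearMap.isUnit_iff_range_eq_top _).1 hunit)]
    exact image_mem_map (isOpen_ball.mem_nhds hx)
  have hcont : ContinuousOn (fun x => x + v x) (closedBall (0 : E) 1) := fun x hx =>
    (continuousAt_id.add (hv x hx).continuousAt).continuousWithinAt
  refine (convex_ball (0 : E) 1).isPreconnected.subset_image_of_isOpen_image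
    ball_subset_closedBall hopen ((isCompact_closedBall 0 1).image_of_continuousOn hcont).isClosed
    (fun x hx => ?_) ⟨0, mem_ball_self one_pos, by simpa using h0⟩
  rw [closedBall_sdiff_ball] at hx
  simp [hsphere x hx, mem_sphere_zero_iff_norm.1 hx]

theorem setIntegral_det_one_add_fderiv_eq_measureReal_ball [FiniteDimensional ℝ E]
    [MeasurableSpace E] [BorelSpace E] (μ : Measure E) [μ.IsAddHaarMeasure] (hc : c < 1)
    (hv : ∀ x ∈ closedBall (0 : E) 1, ContDiffAt ℝ 1 v x)
    (hv' : ∀ x ∈ closedBall (0 : E) 1, ‖fderiv ℝ v x‖ ≤ c)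
    (hmaps : MapsTo (fun x => x + v x) (closedBall 0 1) (closedBall 0 1))
    (hsphere : ∀ x ∈ sphere (0 : E) 1, v x = 0) (h0 : ‖v 0‖ < 1) :
    ∫ x in ball (0 : E) 1, (1 + fderiv ℝ v x).det ∂μ = μ.real (ball 0 1) := by
  have hclosedBall : μ (closedBall (0 : E) 1) = μ (ball 0 1) := by
    rcases subsingleton_or_nontrivial E with hE | hE
    · congr 1
      ext x
      simp [Subsingleton.elim x 0]
    · exact μ.addHaar_closedBall_eq_addHaar_ball 0 1
  have himage : μ ((fun x => x + v x) '' ball 0 1) = μ (ball 0 1) :=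
    le_antisymm (hclosedBall ▸ measure_mono ((image_mono ball_subset_closedBall).trans
      hmaps.image_subset)) (measure_mono (ball_subset_image_add_ball hc hv hv' hsphere h0))
  have hchange := integral_image_eq_integral_abs_det_fderiv_smul μ (f := fun x => x + v x)
    (f' := fun x => 1 + fderiv ℝ v x) measurableSet_ball
    (fun x hx => ((hasFDerivAt_id x).add ((hv x (ball_subset_closedBall hx)).differentiableAt
      one_ne_zero).hasFDerivAt).hasFDerivWithinAt)
    ((injOn_add_of_norm_fderiv_le hc (fun x hx => (hv x hx).differentiableAt one_ne_zero)
      hv').mono ball_subset_closedBall) (fun _ => (1 : ℝ))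
  rw [setIntegral_const, smul_eq_mul, mul_one, measureReal_def, himage] at hchange
  rw [measureReal_def, hchange]
  refine setIntegral_congr_fun measurableSet_ball fun x hx => ?_
  have hdet := ContinuousLinearMap.det_one_add_pos_of_norm_lt_one
    ((hv' x (ball_subset_closedBall hx)).trans_lt hc)
  simp [abs_of_pos hdet]

theorem setIntegral_det_one_add_smul_fderiv_sub_one [FiniteDimensional ℝ E] [MeasurableSpace E]
    [BorelSpace E] (μ : Measure E) [μ.IsAddHaarMeasure] {r : E → E}
    (hr : ∀ x ∈ closedBall (0 : E) 1, ContDiffAt ℝ 1 r x)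
    (hsphere : MapsTo r (closedBall 0 1) (sphere 0 1)) (hid : ∀ x ∈ sphere (0 : E) 1, r x = x)
    {K t : ℝ} (hK : ∀ x ∈ closedBall (0 : E) 1, ‖fderiv ℝ r x - 1‖ ≤ K) (ht0 : 0 ≤ t)
    (htK : t * K < 1) (ht1 : t < 1) :
    ∫ x in ball (0 : E) 1, (1 + t • (fderiv ℝ r x - 1)).det ∂μ = μ.real (ball 0 1) := by
  have hderiv : ∀ x ∈ closedBall (0 : E) 1,
      HasFDerivAt (fun x => t • (r x - x)) (t • (fderiv ℝ r x - 1)) x := fun x hx =>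
    (((hr x hx).differentiableAt one_ne_zero).hasFDerivAt.sub (hasFDerivAt_id x)).const_smul t
  rw [← setIntegral_det_one_add_fderiv_eq_measureReal_ball μ (v := fun x => t • (r x - x)) htK
    (fun x hx => ((hr x hx).sub contDiffAt_id).const_smul t) ?_ ?_ ?_ ?_]
  · refine setIntegral_congr_fun measurableSet_ball fun x hx => ?_
    rw [(hderiv x (ball_subset_closedBall hx)).fderiv]
  · intro x hx
    rw [(hderiv x hx).fderiv, norm_smul, Real.norm_of_nonneg ht0]
    exact mul_le_mul_of_nonneg_left (hK x hx) ht0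
  · exact fun x hx => (convex_closedBall 0 1).add_smul_sub_mem hx
      (sphere_subset_closedBall (hsphere hx)) ⟨ht0, ht1.le⟩
  · intro x hx
    simp [hid x hx]
  · have := mem_sphere_zero_iff_norm.1 (hsphere (mem_closedBall_self zero_le_one))
    simpa [norm_smul, abs_of_nonneg ht0, this] using ht1

end Perturbation

theorem no_contDiff_retraction_closedBall {E : Type*} [NormedAddCommGroup E]
    [InnerProductSpace ℝ E] [FiniteDimensional ℝ E] {r : E → E}
    (hr : ∀ x ∈ closedBall (0 : E) 1, ContDiffAt ℝ 1 r x)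
    (hsphere : MapsTo r (closedBall 0 1) (sphere 0 1)) (hid : ∀ x ∈ sphere (0 : E) 1, r x = x) :
    False := by
  borelize E
  let μ : Measure E := Measure.addHaar
  have hA : ContinuousOn (fun x => fderiv ℝ r x - 1) (closedBall 0 1) := fun x hx =>
    (((hr x hx).continuousAt_fderiv one_ne_zero).sub continuousAt_const).continuousWithinAt
  obtain ⟨K, hK⟩ := (isCompact_closedBall (0 : E) 1).exists_bound_of_continuousOn hA
  have hK0 : 0 ≤ K := (norm_nonneg _).trans (hK 0 (mem_closedBall_self zero_le_one))
  obtain ⟨P, hP⟩ := exists_eval_eq_setIntegral_det_one_add_smul (μ := μ)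
    (isCompact_closedBall (0 : E) 1) hA ball_subset_closedBall
  have hsmall : ∀ t ∈ Icc 0 ((K + 2)⁻¹), P.eval t = μ.real (ball 0 1) := by
    rintro t ⟨ht0, ht⟩
    have htK : t * K < 1 := calc
      t * K ≤ (K + 2)⁻¹ * K := mul_le_mul_of_nonneg_right ht hK0
      _ < 1 := by rw [← div_eq_inv_mul, div_lt_one (by positivity)]; linarith
    have ht1 : t < 1 := ht.trans_lt (inv_lt_one_of_one_lt₀ (by linarith))
    rw [hP, setIntegral_det_one_add_smul_fderiv_sub_one μ hr hsphere hid hK ht0 htK ht1]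
  have hPconst : P = C (μ.real (ball 0 1)) := eq_of_infinite_eval_eq _ _
    ((Icc_infinite (b := (K + 2)⁻¹) (by positivity)).mono fun t ht => by simpa using hsmall t ht)
  have hone : P.eval 1 = 0 := by
    rw [hP]
    refine setIntegral_eq_zero_of_forall_eq_zero fun x hx => ?_
    have hrx : HasFDerivAt r (fderiv ℝ r x) x :=
      ((hr x (ball_subset_closedBall hx)).differentiableAt one_ne_zero).hasFDerivAt
    have hnorm : ∀ᶠ y in 𝓝 x, ‖r y‖ = 1 := eventually_of_mem (isOpen_ball.mem_nhds hx)
      fun y hy => mem_sphere_zero_iff_norm.1 (hsphere (ball_subset_closedBall hy))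
    simpa using hrx.det_eq_zero_of_eventually_norm_eq_one hnorm
  rw [hPconst, eval_C] at hone
  exact (ENNReal.toReal_pos (measure_ball_pos μ 0 one_pos).ne' measure_ball_lt_top.ne).ne' hone

section Retraction

open scoped RealInnerProductSpace

variable {E : Type*} [NormedAddCommGroup E] [InnerProductSpace ℝ E]

/-- The larger root `τ` of `‖x + τ • u‖ ^ 2 = 1`: the time at which the ray from `x` in the
direction `u` leaves the closed unit ball. -/
noncomputable def sphereHitTime (x u : E) : ℝ :=
  (√(⟪x, u⟫ ^ 2 + ‖u‖ ^ 2 * (1 - ‖x‖ ^ 2)) - ⟪x, u⟫) / ‖u‖ ^ 2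

theorem norm_add_sphereHitTime_smul {x u : E} (hx : ‖x‖ ≤ 1) (hu : u ≠ 0) :
    ‖x + sphereHitTime x u • u‖ = 1 := by
  have hu2 : 0 < ‖u‖ ^ 2 := by positivity
  have hdisc : 0 ≤ ⟪x, u⟫ ^ 2 + ‖u‖ ^ 2 * (1 - ‖x‖ ^ 2) := by
    have : 0 ≤ 1 - ‖x‖ ^ 2 := by nlinarith [norm_nonneg x]
    positivity
  have hsq := Real.sq_sqrt hdisc
  have hτ : ‖u‖ ^ 2 * sphereHitTime x u ^ 2 + 2 * ⟪x, u⟫ * sphereHitTime x u + ‖x‖ ^ 2 = 1 := by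
    unfold sphereHitTime
    field_simp
    nlinarith [hsq]
  have : ‖x + sphereHitTime x u • u‖ ^ 2 = 1 := by
    rw [norm_add_sq_real, inner_smul_right, norm_smul, mul_pow, Real.norm_eq_abs, sq_abs]
    linarith
  rwa [pow_eq_one_iff_of_nonneg (norm_nonneg _) two_ne_zero] at this

theorem sphereHitTime_eq_zero {x u : E} (hx : ‖x‖ = 1) (hxu : 0 ≤ ⟪x, u⟫) :
    sphereHitTime x u = 0 := by
  simp [sphereHitTime, hx, Real.sqrt_sq hxu]

theorem ContDiffAt.sphereHitTime {F : Type*} [NormedAddCommGroup F] [NormedSpace ℝ F]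
    {n : WithTop ℕ∞} {f u : F → E} {x : F} (hf : ContDiffAt ℝ n f x) (hu : ContDiffAt ℝ n u x)
    (hux : u x ≠ 0) (hdisc : 0 < ⟪f x, u x⟫ ^ 2 + ‖u x‖ ^ 2 * (1 - ‖f x‖ ^ 2)) :
    ContDiffAt ℝ n (fun y => sphereHitTime (f y) (u y)) x := by
  have hinner := hf.inner ℝ hu
  have hdisc' := (hinner.pow 2).add
    ((hu.norm_sq ℝ).mul (contDiffAt_const (c := 1).sub (hf.norm_sq ℝ)))
  exact ((hdisc'.sqrt hdisc.ne').sub hinner).div (hu.norm_sq ℝ) (by positivity)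

theorem norm_sub_sq_le_two_inner {x y : E} (h : ‖y‖ ≤ ‖x‖) : ‖x - y‖ ^ 2 ≤ 2 * ⟪x, x - y⟫ := by
  rw [norm_sub_sq_real, inner_sub_right, real_inner_self_eq_norm_sq]
  nlinarith [norm_nonneg y]

end Retraction

section Brouwer

open scoped RealInnerProductSpace

variable {E : Type*} [NormedAddCommGroup E] [InnerProductSpace ℝ E] [FiniteDimensional ℝ E]

theorem exists_fixedPoint_of_contDiff_mapsTo_closedBall {q : E → E} (hq : ContDiff ℝ 1 q)
    (hmaps : MapsTo q (closedBall 0 1) (closedBall 0 1)) :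
    ∃ x ∈ closedBall (0 : E) 1, q x = x := by
  by_contra! hfix
  have hu : ∀ x ∈ closedBall (0 : E) 1, x - q x ≠ 0 := fun x hx =>
    sub_ne_zero.2 (hfix x hx).symm
  have hinner : ∀ x ∈ sphere (0 : E) 1, 0 < ⟪x, x - q x⟫ := by
    intro x hx
    have hq1 := mem_closedBall_zero_iff.1 (hmaps (sphere_subset_closedBall hx))
    have hle := norm_sub_sq_le_two_inner (hq1.trans (mem_sphere_zero_iff_norm.1 hx).ge)
    have hpos : 0 < ‖x - q x‖ ^ 2 :=
      pow_pos (norm_pos_iff.2 (hu x (sphere_subset_closedBall hx))) 2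
    linarith
  refine no_contDiff_retraction_closedBall
    (r := fun x => x + sphereHitTime x (x - q x) • (x - q x)) (fun x hx => ?_)
    (fun x hx => mem_sphere_zero_iff_norm.2
      (norm_add_sphereHitTime_smul (mem_closedBall_zero_iff.1 hx) (hu x hx)))
    fun x hx => by simp [sphereHitTime_eq_zero (mem_sphere_zero_iff_norm.1 hx) (hinner x hx).le]
  have hdisc : 0 < ⟪x, x - q x⟫ ^ 2 + ‖x - q x‖ ^ 2 * (1 - ‖x‖ ^ 2) := by
    rcases (mem_closedBall_zero_iff.1 hx).lt_or_eq with hlt | heq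
    · have : 0 < 1 - ‖x‖ ^ 2 := by nlinarith [norm_nonneg x]
      have := hu x hx
      positivity
    · have := hinner x (mem_sphere_zero_iff_norm.2 heq)
      rw [heq]
      positivity
  have hsub : ContDiffAt ℝ 1 (fun y => y - q y) x := contDiffAt_id.sub hq.contDiffAt
  exact contDiffAt_id.add ((contDiffAt_id.sphereHitTime hsub (hu x hx) hdisc).smul hsub)

theorem exists_fixedPoint_of_continuous_mapsTo_closedBall {f : E → E} (hf : Continuous f)
    (hmaps : MapsTo f (closedBall 0 1) (closedBall 0 1)) :
    ∃ x ∈ closedBall (0 : E) 1, f x = x := by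
  by_contra! hfix
  obtain ⟨x₀, hx₀, hmin⟩ := (isCompact_closedBall (0 : E) 1).exists_isMinOn
    (nonempty_closedBall.2 zero_le_one) (hf.sub continuous_id).norm.continuousOn
  set δ := ‖f x₀ - x₀‖ / 3 with hδdef
  have hδ : 0 < δ := by
    have := sub_ne_zero.2 (hfix x₀ hx₀)
    positivity
  obtain ⟨p, hp, hpf, -⟩ := hf.exists_contDiff_approx 1 (ε := fun _ => δ) continuous_const
    fun _ => hδ
  -- `(1 + δ)⁻¹ • p` maps the ball into itself and stays `2 δ`-close to `f` there,
  -- so it cannot have a fixed point.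
  have hpnorm : ∀ x ∈ closedBall (0 : E) 1, ‖p x‖ ≤ 1 + δ := fun x hx => by
    have h1 := mem_closedBall_zero_iff.1 (hmaps hx)
    have h2 := norm_le_norm_add_norm_sub' (p x) (f x)
    have h3 := (hpf x).le
    rw [dist_eq_norm] at h3
    linarith
  have hscale : ∀ x ∈ closedBall (0 : E) 1, ‖(1 + δ)⁻¹ • p x - p x‖ ≤ δ := fun x hx => by
    have hcoef : (1 + δ)⁻¹ - 1 = -(δ / (1 + δ)) := by field_simp; ring
    rw [show (1 + δ)⁻¹ • p x - p x = ((1 + δ)⁻¹ - 1) • p x by rw [sub_smul, one_smul], hcoef,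
      norm_smul, norm_neg, Real.norm_of_nonneg (by positivity)]
    calc δ / (1 + δ) * ‖p x‖ ≤ δ / (1 + δ) * (1 + δ) := by gcongr; exact hpnorm x hx
      _ = δ := by field_simp
  obtain ⟨x, hx, hqx⟩ := exists_fixedPoint_of_contDiff_mapsTo_closedBall
    (q := fun x => (1 + δ)⁻¹ • p x) (hp.const_smul _) fun x hx => by
      rw [mem_closedBall_zero_iff, norm_smul, norm_inv, Real.norm_of_nonneg (by positivity),
        inv_mul_le_one₀ (by positivity)]
      exact hpnorm x hx
  have hfar : ‖f x₀ - x₀‖ ≤ ‖f x - x‖ := hmin hx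
  have hfp : ‖f x - p x‖ < δ := by simpa [dist_eq_norm, norm_sub_rev] using hpf x
  have hpx := hscale x hx
  rw [hqx] at hpx
  have := norm_sub_le_norm_sub_add_norm_sub (f x) (p x) x
  rw [norm_sub_rev (p x)] at this
  linarith

end Brouwer

theorem exists_fixedPoint_of_isBounded_range {E : Type*} [NormedAddCommGroup E]
    [NormedSpace ℝ E] [FiniteDimensional ℝ E] {f : E → E} (hf : Continuous f)
    (hb : Bornology.IsBounded (range f)) : ∃ x, f x = x := by
  let e := toEuclidean (E := E)
  obtain ⟨ρ, hρ, hρf⟩ := (e.lipschitz.isBounded_image hb).subset_closedBall_lt 0 0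
  obtain ⟨y, -, hy⟩ := exists_fixedPoint_of_continuous_mapsTo_closedBall
    (f := fun y => ρ⁻¹ • e (f (e.symm (ρ • y)))) (by fun_prop) fun y _ => by
      rw [mem_closedBall_zero_iff, norm_smul, norm_inv, Real.norm_of_nonneg hρ.le,
        inv_mul_le_one₀ hρ, ← mem_closedBall_zero_iff]
      exact hρf (mem_image_of_mem e (mem_range_self _))
  refine ⟨e.symm (ρ • y), e.injective ?_⟩
  rw [e.apply_symm_apply]
  exact (inv_smul_eq_iff₀ hρ.ne').1 hy

section Box

variable {ι : Type*}

def projBox (a b x : ι → ℝ) : ι → ℝ := fun i => max (a i) (min (b i) (x i))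

theorem projBox_mem {a b : ι → ℝ} (hab : a ≤ b) (x : ι → ℝ) :
    projBox a b x ∈ Set.pi univ fun i => Icc (a i) (b i) :=
  fun i _ => ⟨le_max_left _ _, max_le (hab i) (min_le_left _ _)⟩

theorem projBox_of_mem {a b x : ι → ℝ} (hx : x ∈ Set.pi univ fun i => Icc (a i) (b i)) :
    projBox a b x = x :=
  funext fun i => by simp [projBox, (hx i (mem_univ i)).1, (hx i (mem_univ i)).2]

theorem continuous_projBox (a b : ι → ℝ) : Continuous (projBox a b) := by
  unfold projBox
  fun_prop

end Box

theorem eq_zero_of_max_min_sub_eq {a b y c : ℝ} (hab : a ≤ b)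
    (hy : max a (min b (y - c)) = y) (ha : y = a → c ≤ 0) (hb : y = b → 0 ≤ c) : c = 0 := by
  grind

/-- The Poincaré–Miranda theorem. -/
theorem stmt14 (n : ℕ) (R : Fin n → ℝ) (hR : ∀ i, 0 < R i)
    (g : (Fin n → ℝ) → (Fin n → ℝ))
    (hg : ContinuousOn g (Set.pi Set.univ fun i => Set.Icc (-(R i)) (R i)))
    (hbot : ∀ i : Fin n, ∀ x ∈ Set.pi Set.univ fun i => Set.Icc (-(R i)) (R i),
      x i = -(R i) → g x i ≤ 0)
    (htop : ∀ i : Fin n, ∀ x ∈ Set.pi Set.univ fun i => Set.Icc (-(R i)) (R i),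
      x i = R i → 0 ≤ g x i) :
    ∃ x ∈ Set.pi Set.univ fun i => Set.Icc (-(R i)) (R i), g x = 0 := by
  have hRR : (fun i => -(R i)) ≤ R := fun i => by linarith [hR i]
  let π := projBox (fun i => -(R i)) R
  have hcont : Continuous fun x => π (x - g (π x)) :=
    (continuous_projBox _ _).comp (continuous_id.sub
      (hg.comp_continuous (continuous_projBox _ _) (projBox_mem hRR)))
  obtain ⟨x, hx⟩ := exists_fixedPoint_of_isBounded_range hcont
    ((isCompact_univ_pi fun i => isCompact_Icc).isBounded.subset
      (range_subset_iff.2 fun x => projBox_mem hRR _))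
  have hxP : x ∈ Set.pi Set.univ fun i => Set.Icc (-(R i)) (R i) := hx ▸ projBox_mem hRR _
  rw [show π x = x from projBox_of_mem hxP] at hx
  exact ⟨x, hxP, funext fun i =>
    eq_zero_of_max_min_sub_eq (hRR i) (congrFun hx i) (hbot i x hxP) (htop i x hxP)⟩
end
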